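/- Let G be a connected multigraph and e an edge such that e is neither a bridge nor a self-loop. Then Condition 1 for (G,e), i.e. Ψ_G ∈ ⟨∂Ψ_{G∖e}⟩, is equivalent to Ψ_{G/e} ∈ ⟨∂Ψ_{G∖e}⟩. -/

import Mathlib

/-- A multigraph: each edge `e` has endpoints `fst e` and `snd e`. -/
structure Multigraph (V : Type) (E : Type) where
  fst : E → V
  snd : E → V

namespace Multigraph

variable {V E V' E' W : Type}

/-- Adjacency using only edges in the set `S`. -/
def Adj (G : Multigraph V E) (S : Set E) (u v : V) : Prop :=
  ∃ e ∈ S, (G.fst e = u ∧ G.snd e = v) ∨ (G.fst e = v ∧ G.snd e = u)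

/-- All vertices are connected using edges from `S`. -/
def ConnOn (G : Multigraph V E) (S : Set E) : Prop :=
  ∀ u v : V, Relation.ReflTransGen (G.Adj S) u v

/-- The multigraph is connected. -/
def ConnectedGraph (G : Multigraph V E) : Prop := G.ConnOn Set.univ

/-- A spanning tree: a minimally spanning-connected edge set. -/
def IsSpanningTree (G : Multigraph V E) [DecidableEq E] (T : Finset E) : Prop :=
  G.ConnOn ↑T ∧ ∀ e ∈ T, ¬ G.ConnOn ↑(T.erase e)

open Classical in
/-- The Kirchhoff polynomial `Ψ_G = ∑_{T spanning tree} ∏_{e ∉ T} t_e`. -/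
noncomputable def kirchhoff (G : Multigraph V E) [Fintype E] [DecidableEq E] :
    MvPolynomial E ℚ :=
  ∑ T : Finset E, if G.IsSpanningTree T then ∏ e ∈ Tᶜ, MvPolynomial.X e else 0

/-- Deletion of the edge `e`. -/
def delete (G : Multigraph V E) (e : E) : Multigraph V {e' : E // e' ≠ e} :=
  ⟨fun e' => G.fst e'.1, fun e' => G.snd e'.1⟩

/-- Contraction of the edge `e` (its two endpoints get identified). -/
def contract (G : Multigraph V E) (e : E) :
    Multigraph (Quot fun a b : V => a = G.fst e ∧ b = G.snd e) {e' : E // e' ≠ e} :=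
  ⟨fun e' => Quot.mk _ (G.fst e'.1), fun e' => Quot.mk _ (G.snd e'.1)⟩

/-- Identify the two vertices `a` and `b`. -/
def identify (G : Multigraph V E) (a b : V) :
    Multigraph (Quot fun x y : V => x = a ∧ y = b) E :=
  ⟨fun e => Quot.mk _ (G.fst e), fun e => Quot.mk _ (G.snd e)⟩

/-- A self-loop. -/
def IsLoop (G : Multigraph V E) (e : E) : Prop := G.fst e = G.snd e

/-- A bridge: deleting `e` disconnects the graph. -/
def IsBridge (G : Multigraph V E) (e : E) : Prop := ¬ G.ConnOn {e' | e' ≠ e}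

/-- The whole graph is a tree (its full edge set is a spanning tree). -/
def IsTreeGraph (G : Multigraph V E) [Fintype E] [DecidableEq E] : Prop := G.IsSpanningTree Finset.univ

/-- A regular edge: not a bridge, not a self-loop, and deleting it does not leave a tree. -/
def IsRegular (G : Multigraph V E) [Fintype E] [DecidableEq E] (e : E) : Prop :=
  ¬ G.IsBridge e ∧ ¬ G.IsLoop e ∧ ¬ (G.delete e).IsTreeGraph

/-- The Jacobian ideal of a polynomial: the ideal generated by its partial derivatives. -/
noncomputable def jacobianIdeal {σ : Type} (f : MvPolynomial σ ℚ) :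
    Ideal (MvPolynomial σ ℚ) :=
  Ideal.span (Set.range fun i : σ => MvPolynomial.pderiv i f)

/-- Aluffi's Condition 1 for the pair `(G, e)`: `Ψ_G` lies in the Jacobian ideal of `Ψ_{G∖e}`. -/
def Cond1 (G : Multigraph V E) [Fintype E] [DecidableEq E] (e : E) : Prop :=
  G.kirchhoff ∈
    jacobianIdeal (MvPolynomial.rename (Subtype.val : {e' : E // e' ≠ e} → E)
      (G.delete e).kirchhoff)

end Multigraph

/-! Splitting the spanning trees of `G` according to whether they contain `e` gives
`Ψ_G = t_e Ψ_{G∖e} + Ψ_{G/e}`; the non-loop hypothesis is what makes the spanning trees of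
`G/e` exactly the trees of `G` through `e`. By basis exchange all spanning trees of `G∖e` have
the same size, so `Ψ_{G∖e}` is homogeneous, and Euler's identity `∑ t_i ∂_i Ψ = (deg Ψ) Ψ` puts
`Ψ_{G∖e}`, hence `t_e Ψ_{G∖e}`, into `⟨∂Ψ_{G∖e}⟩` as long as the degree is positive. In degree
`0` the Jacobian ideal is zero and both conditions fail, since `Ψ_G` and `Ψ_{G/e}` are nonzero
(`G` and `G/e` are connected because `e` is not a bridge). -/

theorem Relation.ReflTransGen.exists_rel_of_pred_of_not_pred {α : Type*} {r : α → α → Prop}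
    {p : α → Prop} {a b : α} (h : Relation.ReflTransGen r a b) (ha : p a) (hb : ¬ p b) :
    ∃ c d, p c ∧ ¬ p d ∧ r c d := by
  induction h with
  | refl => exact absurd ha hb
  | @tail c d _ hcd ih =>
    by_cases hc : p c
    exacts [⟨c, d, hc, hb, hcd⟩, ih hc]

theorem Finset.exists_subset_forall_not_erase {α : Type*} [DecidableEq α] {P : Finset α → Prop}
    {S : Finset α} (hS : P S) : ∃ T ⊆ S, P T ∧ ∀ x ∈ T, ¬ P (T.erase x) := by
  obtain ⟨T, hTS, hT, hmin⟩ := exists_minimal_le_of_wellFoundedLT P S hS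
  exact ⟨T, hTS, hT, fun x hx hP => notMem_erase x T (hmin hP (erase_subset x T) hx)⟩

namespace MvPolynomial.IsHomogeneous

variable {σ : Type} {f : MvPolynomial σ ℚ}

theorem mem_jacobianIdeal [Fintype σ] {n : ℕ} (hf : f.IsHomogeneous n) (hn : n ≠ 0) :
    f ∈ Multigraph.jacobianIdeal f := by
  have hsum : ∑ i, X i * pderiv i f ∈ Multigraph.jacobianIdeal f :=
    Ideal.sum_mem _ fun i _ => Ideal.mul_mem_left _ _ (Ideal.subset_span ⟨i, rfl⟩)
  rwa [hf.sum_X_mul_pderiv, ← Nat.cast_smul_eq_nsmul ℚ, smul_eq_C_mul,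
    Ideal.unit_mul_mem_iff_mem _ ((Nat.cast_ne_zero.2 hn).isUnit.map C)] at hsum

theorem jacobianIdeal_eq_bot (hf : f.IsHomogeneous 0) : Multigraph.jacobianIdeal f = ⊥ := by
  rw [← totalDegree_zero_iff_isHomogeneous, totalDegree_eq_zero_iff_eq_C] at hf
  rw [Multigraph.jacobianIdeal, hf]
  simp

end MvPolynomial.IsHomogeneous

namespace Multigraph

open Finset MvPolynomial

variable {V E : Type} {G : Multigraph V E}

abbrev Reach (G : Multigraph V E) (S : Set E) : V → V → Prop :=
  Relation.ReflTransGen (G.Adj S)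

section Reach

variable {S S' : Set E} {u v : V}

theorem adj_of_mem {f : E} (hf : f ∈ S) : G.Adj S (G.fst f) (G.snd f) :=
  ⟨f, hf, .inl ⟨rfl, rfl⟩⟩

theorem Adj.symm (h : G.Adj S u v) : G.Adj S v u :=
  let ⟨f, hf, h⟩ := h; ⟨f, hf, h.symm⟩

theorem Adj.mono (hS : S ⊆ S') (h : G.Adj S u v) : G.Adj S' u v :=
  let ⟨f, hf, h⟩ := h; ⟨f, hS hf, h⟩

theorem Reach.symm (h : G.Reach S u v) : G.Reach S v u := by
  induction h with
  | refl => exact .refl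
  | tail _ hbc ih => exact .head hbc.symm ih

theorem reach_equivalence : Equivalence (G.Reach S) :=
  ⟨fun _ => .refl, Reach.symm, .trans⟩

theorem Reach.mono (hS : S ⊆ S') (h : G.Reach S u v) : G.Reach S' u v :=
  Relation.ReflTransGen.mono (fun _ _ => Adj.mono hS) _ _ h

theorem Reach.of_forall_reach (h : ∀ f ∈ S, G.Reach S' (G.fst f) (G.snd f))
    (huv : G.Reach S u v) : G.Reach S' u v := by
  refine Relation.ReflTransGen.lift' id (fun a b hab => ?_) _ _ huv
  obtain ⟨f, hf, hab⟩ := hab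
  rcases hab with ⟨rfl, rfl⟩ | ⟨rfl, rfl⟩
  exacts [h f hf, (h f hf).symm]

theorem eq_of_reach_empty (h : G.Reach ∅ u v) : u = v := by
  rcases h.cases_tail with rfl | ⟨_, _, _, hf, _⟩
  exacts [rfl, hf.elim]

theorem ConnOn.mono (hS : S ⊆ S') (h : G.ConnOn S) : G.ConnOn S' :=
  fun u v => Reach.mono hS (h u v)

theorem ConnOn.of_forall_reach (hS : G.ConnOn S)
    (h : ∀ f ∈ S, G.Reach S' (G.fst f) (G.snd f)) : G.ConnOn S' :=
  fun u v => Reach.of_forall_reach h (hS u v)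

end Reach

section Exchange

variable [DecidableEq E] {S T : Finset E} {u w : V}

theorem Reach.erase_or_reach_fst_or_reach_snd (h : G.Reach ↑S u w) (y : E) :
    G.Reach ↑(S.erase y) u w ∨ G.Reach ↑(S.erase y) (G.fst y) w ∨
      G.Reach ↑(S.erase y) (G.snd y) w := by
  induction h with
  | refl => exact .inl .refl
  | tail _ hbc ih =>
    obtain ⟨f, hf, hfc⟩ := hbc
    by_cases hfy : f = y
    · subst hfy
      rcases hfc with ⟨-, rfl⟩ | ⟨rfl, -⟩
      exacts [.inr (.inr .refl), .inr (.inl .refl)]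
    · have hadj : G.Adj ↑(S.erase y) _ _ := ⟨f, mem_erase.2 ⟨hfy, hf⟩, hfc⟩
      exact ih.imp (·.tail hadj) (Or.imp (·.tail hadj) (·.tail hadj))

theorem ConnOn.erase_of_reach {y : E} (hS : G.ConnOn ↑S)
    (hy : G.Reach ↑(S.erase y) (G.fst y) (G.snd y)) : G.ConnOn ↑(S.erase y) :=
  hS.of_forall_reach fun f hf =>
    if hfy : f = y then hfy ▸ hy else .single (adj_of_mem (mem_erase.2 ⟨hfy, hf⟩))

theorem ConnOn.exists_connOn_insert_erase {y : E} (hS : G.ConnOn ↑S)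
    (hy : ¬ G.ConnOn ↑(S.erase y)) (hT : G.ConnOn ↑T) :
    ∃ x ∈ T, x ∉ S.erase y ∧ G.ConnOn ↑(insert x (S.erase y)) := by
  have hsep : ¬ G.Reach ↑(S.erase y) (G.fst y) (G.snd y) := fun h => hy (hS.erase_of_reach h)
  -- `x` is an edge of `T` crossing the cut that `S.erase y` leaves between the ends of `y`.
  obtain ⟨c, d, hc, hd, x, hxT, hx⟩ :=
    (hT (G.fst y) (G.snd y)).exists_rel_of_pred_of_not_pred
      (p := G.Reach ↑(S.erase y) (G.fst y)) .refl hsep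
  have hdy : G.Reach ↑(S.erase y) (G.snd y) d := by
    rcases Reach.erase_or_reach_fst_or_reach_snd (hS (G.fst y) d) y with h | h | h
    exacts [absurd h hd, absurd h hd, h]
  have hxS : x ∉ S.erase y := fun hxS => hd (hc.tail ⟨x, hxS, hx⟩)
  have hsub : (↑(S.erase y) : Set E) ⊆ ↑(insert x (S.erase y)) :=
    coe_subset.2 (subset_insert _ _)
  refine ⟨x, hxT, hxS, hS.of_forall_reach fun f hf => ?_⟩
  by_cases hfy : f = y
  · subst hfy
    exact ((hc.mono hsub).tail ⟨x, mem_insert_self _ _, hx⟩).trans (hdy.mono hsub).symm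
  · exact .single (adj_of_mem (mem_insert_of_mem (mem_erase.2 ⟨hfy, hf⟩)))

theorem ConnOn.exists_connOn_insert_erase_of_not_isLoop {e : E} (hT : G.ConnOn ↑T)
    (he : ¬ G.IsLoop e) : ∃ y ∈ T, G.ConnOn ↑(insert e (T.erase y)) := by
  obtain ⟨T', hT'T, hT', hmin⟩ :=
    exists_subset_forall_not_erase
      (P := fun T : Finset E => G.Reach (T : Set E) (G.fst e) (G.snd e)) (hT _ _)
  obtain ⟨y, hy⟩ : T'.Nonempty := nonempty_iff_ne_empty.2 fun h =>
    he (eq_of_reach_empty (by simpa [h] using hT'))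
  have hsub : (↑(T'.erase y) : Set E) ⊆ ↑(insert e (T.erase y)) :=
    coe_subset.2 ((erase_subset_erase y hT'T).trans (subset_insert _ _))
  have hsep := hmin y hy
  have he' : G.Reach ↑(insert e (T.erase y)) (G.fst e) (G.snd e) :=
    .single (adj_of_mem (mem_insert_self _ _))
  -- Removing `y` from the minimal `T'` separates the ends of `e`, so each end of `y` stays
  -- joined to a different end of `e`, and `e` closes the gap.
  have hyy : G.Reach ↑(insert e (T.erase y)) (G.fst y) (G.snd y) := by
    obtain hv | hv := (hT'.erase_or_reach_fst_or_reach_snd y).resolve_left hsep <;>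
    obtain hu | hu := (hT'.symm.erase_or_reach_fst_or_reach_snd y).resolve_left (hsep ·.symm)
    · exact absurd (hu.symm.trans hv) hsep
    · exact (hv.mono hsub).trans (he'.symm.trans (hu.mono hsub).symm)
    · exact (hu.mono hsub).trans (he'.trans (hv.mono hsub).symm)
    · exact absurd (hu.symm.trans hv) hsep
  refine ⟨y, hT'T hy, hT.of_forall_reach fun f hf => ?_⟩
  by_cases hfy : f = y
  · exact hfy ▸ hyy
  · exact .single (adj_of_mem (mem_insert_of_mem (mem_erase.2 ⟨hfy, hf⟩)))

end Exchange

section SpanningTree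

variable [DecidableEq E] {S T : Finset E}

theorem exists_isSpanningTree (hS : G.ConnOn ↑S) : ∃ T ⊆ S, G.IsSpanningTree T :=
  exists_subset_forall_not_erase (P := fun T : Finset E => G.ConnOn (T : Set E)) hS

theorem IsSpanningTree.card_le (hT : G.IsSpanningTree T) (hS : G.ConnOn ↑S) : #T ≤ #S := by
  induction h : #(S \ T) using Nat.strong_induction_on generalizing S with
  | _ n ih =>
  by_cases hST : S ⊆ T
  · refine card_le_card fun x hx => ?_
    by_contra hxS
    exact hT.2 x hx (hS.mono (coe_subset.2 fun z hz =>
      mem_erase.2 ⟨fun hzx => hxS (hzx ▸ hz), hST hz⟩))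
  obtain ⟨y, hyS, hyT⟩ := not_subset.1 hST
  have hlt : #((S.erase y) \ T) < n := by
    rw [erase_sdiff_comm, ← h]
    exact card_erase_lt_of_mem (mem_sdiff.2 ⟨hyS, hyT⟩)
  by_cases hy : G.ConnOn ↑(S.erase y)
  · exact (ih _ hlt hy rfl).trans (card_le_card (erase_subset y S))
  · obtain ⟨x, hxT, hxS, hconn⟩ := hS.exists_connOn_insert_erase hy hT.1
    calc #T ≤ #(insert x (S.erase y)) :=
          ih _ (by rwa [insert_sdiff_of_mem _ hxT]) hconn rfl
      _ = #S := by rw [card_insert_of_notMem hxS, card_erase_add_one hyS]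

theorem IsSpanningTree.card_eq (hS : G.IsSpanningTree S) (hT : G.IsSpanningTree T) :
    #S = #T :=
  (hS.card_le hT.1).antisymm (hT.card_le hS.1)

end SpanningTree

section DeleteContract

variable {e : E}

theorem adj_delete (S : Set {e' : E // e' ≠ e}) :
    (G.delete e).Adj S = G.Adj (Subtype.val '' S) := by
  ext u v
  simp [Adj, delete]

theorem connOn_delete {S : Set {e' : E // e' ≠ e}} :
    (G.delete e).ConnOn S ↔ G.ConnOn (Subtype.val '' S) := by
  simp only [ConnOn, adj_delete]

theorem isSpanningTree_delete [DecidableEq E] {S : Finset {e' : E // e' ≠ e}} :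
    (G.delete e).IsSpanningTree S ↔ G.IsSpanningTree (S.map (.subtype _)) := by
  simp only [IsSpanningTree, forall_mem_map, ← map_erase]
  simp only [connOn_delete, coe_map, Function.Embedding.coe_subtype]

theorem reach_of_mk_eq {T : Set E} (he : e ∈ T) {u v : V}
    (h : Quot.mk (fun a b : V => a = G.fst e ∧ b = G.snd e) u = Quot.mk _ v) :
    G.Reach T u v :=
  reach_equivalence.eqvGen_iff.1 <| Relation.EqvGen.eqvGen_mono
    (fun _ _ ⟨ha, hb⟩ => ha ▸ hb ▸ .single (adj_of_mem he)) _ _ (Quot.eqvGen_exact h)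

theorem reach_of_reach_contract {S : Set {e' : E // e' ≠ e}} {x y}
    (h : (G.contract e).Reach S x y) :
    ∀ u v, Quot.mk _ u = x → Quot.mk _ v = y → G.Reach (insert e (Subtype.val '' S)) u v := by
  induction h with
  | refl => exact fun u v hu hv => reach_of_mk_eq (Set.mem_insert e _) (hu.trans hv.symm)
  | tail _ hbc ih =>
    intro u v hu hv
    obtain ⟨f, hf, hfbc⟩ := hbc
    have hfT : f.1 ∈ insert e (Subtype.val '' S) := Set.mem_insert_of_mem _ ⟨f, hf, rfl⟩
    rcases hfbc with ⟨hb, hc⟩ | ⟨hc, hb⟩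
    · exact (ih u _ hu hb).trans (.head (adj_of_mem hfT)
        (reach_of_mk_eq (Set.mem_insert e _) (hc.trans hv.symm)))
    · exact (ih u _ hu hb).trans (.head (adj_of_mem hfT).symm
        (reach_of_mk_eq (Set.mem_insert e _) (hc.trans hv.symm)))

theorem connOn_contract {S : Set {e' : E // e' ≠ e}} :
    (G.contract e).ConnOn S ↔ G.ConnOn (insert e (Subtype.val '' S)) := by
  refine ⟨fun h u v => reach_of_reach_contract (h _ _) u v rfl rfl, fun h x y => ?_⟩
  induction x using Quot.ind with | _ u =>
  induction y using Quot.ind with | _ v =>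
  refine Relation.ReflTransGen.lift' (Quot.mk _) (fun a b hab => ?_) _ _ (h u v)
  obtain ⟨f, rfl | ⟨f, hf, rfl⟩, hab⟩ := hab
  · have hmk : Quot.mk (fun a b : V => a = G.fst f ∧ b = G.snd f) (G.fst f) =
        Quot.mk _ (G.snd f) := Quot.sound ⟨rfl, rfl⟩
    rcases hab with ⟨rfl, rfl⟩ | ⟨rfl, rfl⟩
    all_goals simp only [Function.onFun, hmk, Relation.ReflTransGen.refl]
  · exact .single ⟨f, hf, hab.imp (And.imp (congrArg _) (congrArg _))
      (And.imp (congrArg _) (congrArg _))⟩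

theorem isSpanningTree_contract [DecidableEq E] (he : ¬ G.IsLoop e)
    {S : Finset {e' : E // e' ≠ e}} :
    (G.contract e).IsSpanningTree S ↔ G.IsSpanningTree (insert e (S.map (.subtype _))) := by
  have hconn (S : Finset {e' : E // e' ≠ e}) :
      (G.contract e).ConnOn ↑S ↔ G.ConnOn ↑(insert e (S.map (.subtype _))) := by
    rw [connOn_contract, coe_insert, coe_map, Function.Embedding.coe_subtype]
  have herase (x : {e' : E // e' ≠ e}) :
      (insert e (S.map (.subtype _))).erase (Function.Embedding.subtype (· ≠ e) x) =
        insert e ((S.erase x).map (.subtype _)) := by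
    rw [map_erase, Function.Embedding.coe_subtype, erase_insert_of_ne (Ne.symm x.2)]
  simp only [IsSpanningTree, hconn, forall_mem_insert, forall_mem_map, herase]
  -- If `S` alone connected `G`, trading one of its edges for `e` would connect `G/e` with a
  -- proper subset of `S`.
  refine and_congr_right fun _ => ⟨fun h => ⟨fun hT => ?_, h⟩, And.right⟩
  rw [erase_insert (by simp)] at hT
  obtain ⟨y, hy, hy'⟩ := hT.exists_connOn_insert_erase_of_not_isLoop he
  obtain ⟨x, hx, rfl⟩ := mem_map.1 hy
  exact h x hx (by rwa [← map_erase] at hy')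

end DeleteContract

section Kirchhoff

variable [Fintype E] [DecidableEq E]

theorem sum_finset_eq_sum_map_add_sum_insert_map {M : Type} [AddCommMonoid M] (e : E)
    (g : Finset E → M) :
    ∑ T, g T = ∑ S : Finset {e' : E // e' ≠ e}, g (S.map (.subtype _)) +
      ∑ S : Finset {e' : E // e' ≠ e}, g (insert e (S.map (.subtype _))) := by
  have huniv : (univ : Finset E) = insert e (univ.map (.subtype (· ≠ e))) := by
    rw [univ_map_subtype, filter_ne', insert_erase (mem_univ e)]
  have hpow : (univ.map (Function.Embedding.subtype (· ≠ e))).powerset =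
      (univ : Finset (Finset {e' : E // e' ≠ e})).map
        (mapEmbedding (.subtype _)).toEmbedding := by
    ext T
    simp [subset_map_iff, eq_comm]
  conv_lhs => rw [← powerset_univ, huniv]
  rw [sum_powerset_insert (by simp), hpow, sum_map, sum_map]
  rfl

theorem map_compl_subtype_ne {e : E} (S : Finset {e' : E // e' ≠ e}) :
    Sᶜ.map (.subtype _) = (insert e (S.map (.subtype _)))ᶜ := by
  ext x
  by_cases hx : x = e <;> simp [hx]

theorem kirchhoff_ne_zero {T : Finset E} (hT : G.IsSpanningTree T) : G.kirchhoff ≠ 0 := by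
  intro h
  have h1 := congrArg (eval fun _ => (1 : ℚ)) h
  simp only [kirchhoff, map_sum, apply_ite, map_prod, eval_X, prod_const_one, map_zero,
    sum_boole, Nat.cast_eq_zero, card_eq_zero, filter_eq_empty_iff] at h1
  exact h1 (mem_univ T) hT

theorem isHomogeneous_kirchhoff {T : Finset E} (hT : G.IsSpanningTree T) :
    G.kirchhoff.IsHomogeneous #Tᶜ := by
  refine IsHomogeneous.sum _ _ _ fun S _ => ?_
  split_ifs with hS
  · have := IsHomogeneous.prod Sᶜ (fun f => (X f : MvPolynomial E ℚ)) (fun _ => 1)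
      fun f _ => isHomogeneous_X ℚ f
    rwa [sum_const, smul_eq_mul, mul_one, card_compl, hS.card_eq hT, ← card_compl] at this
  · exact isHomogeneous_zero _ _ _

theorem kirchhoff_eq_X_mul_delete_add_contract {e : E} (he : ¬ G.IsLoop e) :
    G.kirchhoff = X e * rename Subtype.val (G.delete e).kirchhoff +
      rename Subtype.val (G.contract e).kirchhoff := by
  have hrename (S : Finset {e' : E // e' ≠ e}) :
      rename Subtype.val (∏ f ∈ Sᶜ, X f : MvPolynomial _ ℚ) =
        ∏ f ∈ (insert e (S.map (.subtype _)))ᶜ, X f := by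
    rw [map_prod, ← map_compl_subtype_ne, prod_map]
    simp only [rename_X, Function.Embedding.coe_subtype]
  rw [kirchhoff, sum_finset_eq_sum_map_add_sum_insert_map e, kirchhoff, kirchhoff, map_sum,
    map_sum, mul_sum]
  congr 1 <;> refine sum_congr rfl fun S _ => ?_
  · rw [isSpanningTree_delete]
    split_ifs
    · rw [hrename, compl_insert, mul_prod_erase _ _ (by simp)]
    · rw [map_zero, mul_zero]
  · rw [isSpanningTree_contract he]
    split_ifs
    · rw [hrename]
    · rw [map_zero]

end Kirchhoff

end Multigraph

open Multigraph MvPolynomial in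
theorem cond1_iff_contract_mem_general {V E : Type} [Fintype E] [DecidableEq E]
    (G : Multigraph V E) (e : E)
    (hbr : ¬ G.IsBridge e) (hloop : ¬ G.IsLoop e) :
    G.Cond1 e ↔
      rename (Subtype.val : {e' : E // e' ≠ e} → E) (G.contract e).kirchhoff ∈
        jacobianIdeal (rename (Subtype.val : {e' : E // e' ≠ e} → E)
          (G.delete e).kirchhoff) := by
  have hdel : (G.delete e).ConnOn ↑(Finset.univ : Finset {e' : E // e' ≠ e}) := by
    simpa [connOn_delete, IsBridge] using hbr
  have hG : G.ConnOn ↑(Finset.univ : Finset E) := (connOn_delete.1 hdel).mono (by simp)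
  have hcon : (G.contract e).ConnOn ↑(Finset.univ : Finset {e' : E // e' ≠ e}) :=
    connOn_contract.2 (hG.mono fun x _ => by by_cases hx : x = e <;> simp [hx])
  obtain ⟨T, -, hT⟩ := exists_isSpanningTree hdel
  have hhom := (isHomogeneous_kirchhoff hT).rename_isHomogeneous (f := Subtype.val)
  rcases eq_or_ne Tᶜ.card 0 with h0 | hn
  · obtain ⟨TG, -, hTG⟩ := exists_isSpanningTree hG
    obtain ⟨TC, -, hTC⟩ := exists_isSpanningTree hcon
    rw [h0] at hhom
    rw [Cond1, hhom.jacobianIdeal_eq_bot, Ideal.mem_bot, Ideal.mem_bot,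
      map_eq_zero_iff _ (rename_injective _ Subtype.val_injective)]
    exact iff_of_false (kirchhoff_ne_zero hTG) (kirchhoff_ne_zero hTC)
  · rw [Cond1, kirchhoff_eq_X_mul_delete_add_contract hloop]
    exact Ideal.add_mem_iff_right _ (Ideal.mul_mem_left _ _ (hhom.mem_jacobianIdeal hn))

open Multigraph MvPolynomial in
/-- For `e` neither a bridge nor a self-loop, Condition 1 for `(G,e)` is
equivalent to `Ψ_{G/e} ∈ ⟨∂Ψ_{G∖e}⟩`. -/
theorem cond1_iff_contract_mem {V E : Type} [Fintype E] [DecidableEq E]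
    (G : Multigraph V E) (hconn : G.ConnectedGraph) (e : E)
    (hbr : ¬ G.IsBridge e) (hloop : ¬ G.IsLoop e) :
    G.Cond1 e ↔
      rename (Subtype.val : {e' : E // e' ≠ e} → E) (G.contract e).kirchhoff ∈
        jacobianIdeal (rename (Subtype.val : {e' : E // e' ≠ e} → E)
          (G.delete e).kirchhoff) :=
  cond1_iff_contract_mem_general G e hbr hloop
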